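/- arXiv:math-ph/0703058 — 3 statements merged into one kernel-verified Lean document; each statement's English description precedes it below -/
import Mathlib

section
/- Kreĭn's formula: Let Λ be a finite index set, Δ ⊆ Λ, let H̃ be a Hermitian matrix in Matrix Λ Λ ℂ, and let V_Δ be a real diagonal matrix supported on Δ (i.e., V_Δ(x,x) = 0 for x ∉ Δ). Set H_Λ = H̃ + V_Δ. For z ∈ ℂ with Im z > 0, let g_Δ(z) be the Δ×Δ submatrix of (H_Λ − z·1)⁻¹ and g̃_Δ(z) the Δ×Δ submatrix of (H̃ − z·1)⁻¹. Then g̃_Δ(z) is invertible and g_Δ(z) = ( V_Δ|_Δ + g̃_Δ(z)⁻¹ )⁻¹, where V_Δ|_Δ is the Δ×Δ diagonal block of V_Δ. -/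
/-!
Matrices with positive definite imaginary part are invertible, and this class is stable under
compressions and under `M ↦ -M⁻¹`. Since `z - H` belongs to it for Hermitian `H` and `Im z > 0`,
every compression of `(H - z)⁻¹` is invertible. The resolvent identity
`(H̃ - z)⁻¹ - (H̃ + V - z)⁻¹ = (H̃ - z)⁻¹ V (H̃ + V - z)⁻¹` compresses to `g̃ - g = g̃ V g`
because `V` is a diagonal supported on `Δ`, and solving this for `g` gives `g = (V + g̃⁻¹)⁻¹`.
-/

open Matrix

namespace Matrix

variable {m n : Type*} [Fintype m] [Fintype n]

/-- The imaginary part `(M - Mᴴ) / 2i` of `M` is positive definite. -/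
def ImPosDef (M : Matrix n n ℂ) : Prop :=
  ∀ v : n → ℂ, v ≠ 0 → 0 < (star v ⬝ᵥ M *ᵥ v).im

theorem ImPosDef.isUnit [DecidableEq n] {M : Matrix n n ℂ} (hM : M.ImPosDef) : IsUnit M := by
  rw [isUnit_iff_isUnit_det, isUnit_iff_ne_zero]
  intro hdet
  obtain ⟨v, hv, hMv⟩ := exists_mulVec_eq_zero_iff.mpr hdet
  simpa [hMv] using hM v hv

theorem ImPosDef.inv_neg [DecidableEq n] {M : Matrix n n ℂ} (hM : M.ImPosDef) :
    ((-M)⁻¹).ImPosDef := by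
  intro v hv
  have hdet : IsUnit (-M).det := (isUnit_iff_isUnit_det _).mp hM.isUnit.neg
  set w := (-M)⁻¹ *ᵥ v
  have hvw : (-M) *ᵥ w = v := by rw [mulVec_mulVec, mul_nonsing_inv _ hdet, one_mulVec]
  have hw : w ≠ 0 := by
    intro h0
    rw [← hvw, h0, mulVec_zero] at hv
    exact hv rfl
  calc 0 < (star w ⬝ᵥ M *ᵥ w).im := hM w hw
    _ = (star ((-M) *ᵥ w) ⬝ᵥ w).im := by
      rw [star_dotProduct, Complex.star_def, Complex.conj_im, neg_mulVec, star_neg,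
        neg_dotProduct, Complex.neg_im]
    _ = (star v ⬝ᵥ (-M)⁻¹ *ᵥ v).im := by rw [hvw]

theorem ImPosDef.submatrix {M : Matrix n n ℂ} (hM : M.ImPosDef) {e : m → n}
    (he : Function.Injective e) : (M.submatrix e e).ImPosDef := by
  intro u hu
  set v : n → ℂ := Function.extend e u 0
  have hv : ∀ i, v (e i) = u i := he.extend_apply u 0
  have hv_off : ∀ x ∉ Set.range e, v x = 0 := fun x hx => Function.extend_apply' _ _ _ hx
  have hv0 : v ≠ 0 := fun h => hu (funext fun i => by rw [← hv, h, Pi.zero_apply, Pi.zero_apply])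
  have hMv : ∀ i, (M *ᵥ v) (e i) = (M.submatrix e e *ᵥ u) i := fun i =>
    (Fintype.sum_of_injective e he _ _ (fun x hx => by simp [hv_off x hx])
      (fun j => by simp [hv])).symm
  have hform : star v ⬝ᵥ M *ᵥ v = star u ⬝ᵥ M.submatrix e e *ᵥ u :=
    (Fintype.sum_of_injective e he _ _ (fun x hx => by simp [hv_off x hx])
      (fun i => by simp [hv, hMv])).symm
  simpa [hform] using hM v hv0

theorem IsHermitian.im_star_dotProduct_mulVec {H : Matrix n n ℂ} (hH : H.IsHermitian)
    (v : n → ℂ) : (star v ⬝ᵥ H *ᵥ v).im = 0 := by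
  have : star (star v ⬝ᵥ H *ᵥ v) = star v ⬝ᵥ H *ᵥ v := by
    rw [← star_dotProduct, star_mulVec, hH.eq, dotProduct_mulVec]
  exact Complex.conj_eq_iff_im.mp this

open scoped ComplexOrder in
theorem IsHermitian.imPosDef_smul_one_sub [DecidableEq n] {H : Matrix n n ℂ}
    (hH : H.IsHermitian) {z : ℂ} (hz : 0 < z.im) : (z • 1 - H).ImPosDef := by
  intro v hv
  obtain ⟨hre, him⟩ := Complex.lt_def.mp (dotProduct_star_self_pos_iff.mpr hv)
  rw [Complex.zero_re] at hre
  rw [Complex.zero_im] at him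
  simp only [sub_mulVec, dotProduct_sub, smul_mulVec, one_mulVec, dotProduct_smul, smul_eq_mul,
    Complex.sub_im, Complex.mul_im, hH.im_star_dotProduct_mulVec, ← him]
  nlinarith

theorem IsHermitian.isUnit_sub_smul_one [DecidableEq n] {H : Matrix n n ℂ}
    (hH : H.IsHermitian) {z : ℂ} (hz : 0 < z.im) : IsUnit (H - z • 1) := by
  simpa using (hH.imPosDef_smul_one_sub hz).isUnit.neg

theorem IsHermitian.imPosDef_inv_sub_smul_one [DecidableEq n] {H : Matrix n n ℂ}
    (hH : H.IsHermitian) {z : ℂ} (hz : 0 < z.im) : ((H - z • 1)⁻¹).ImPosDef := by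
  simpa using (hH.imPosDef_smul_one_sub hz).inv_neg

theorem submatrix_mul_diagonal_mul {l o p q α : Type*} [DecidableEq m] [DecidableEq n]
    [NonUnitalNonAssocSemiring α]
    (X : Matrix l n α) (d : n → α) (Y : Matrix n o α) {e : m → n} (he : Function.Injective e)
    (hd : ∀ x ∉ Set.range e, d x = 0) (e₁ : p → l) (e₂ : q → o) :
    (X * diagonal d * Y).submatrix e₁ e₂ =
      X.submatrix e₁ e * diagonal (fun i => d (e i)) * Y.submatrix e e₂ := by
  ext i j
  simp only [submatrix_apply, mul_apply (M := _ * diagonal _), mul_diagonal]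
  exact (Fintype.sum_of_injective e he _ _ (fun x hx => by simp [hd x hx]) fun k => rfl).symm

theorem eq_inv_add_inv_of_sub_eq_mul_mul {R : Type*} [DecidableEq n] [CommRing R]
    {G g d : Matrix n n R} (hG : IsUnit G) (h : G - g = G * d * g) : g = (d + G⁻¹)⁻¹ := by
  have hGG : G⁻¹ * G = 1 := nonsing_inv_mul G ((isUnit_iff_isUnit_det G).mp hG)
  refine (inv_eq_right_inv ?_).symm
  calc (d + G⁻¹) * g = G⁻¹ * (G * d * g) + G⁻¹ * g := by
        rw [← mul_assoc, ← mul_assoc, hGG, one_mul, add_mul]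
    _ = 1 := by rw [← h, mul_sub, hGG, sub_add_cancel]

end Matrix

/-- Kreĭn's formula: if `H_Λ = H̃ + V_Δ` with `V_Δ` a real diagonal potential supported
on `Δ ⊆ Λ`, then the `Δ×Δ` compression of the resolvent of `H̃` is invertible and
`g_Δ(z) = (V_Δ|_Δ + g̃_Δ(z)⁻¹)⁻¹`. -/
theorem krein_formula {Λ : Type*} [Fintype Λ] [DecidableEq Λ] (Δ : Finset Λ)
    (Ht : Matrix Λ Λ ℂ) (hHt : Ht.IsHermitian)
    (V : Λ → ℝ) (hV : ∀ x ∉ Δ, V x = 0)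
    (z : ℂ) (hz : 0 < z.im) :
    IsUnit (((Ht - z • (1 : Matrix Λ Λ ℂ))⁻¹).submatrix
        (fun i : Δ => (i : Λ)) (fun i : Δ => (i : Λ))) ∧
    (((Ht + Matrix.diagonal fun x => (V x : ℂ)) - z • (1 : Matrix Λ Λ ℂ))⁻¹).submatrix
        (fun i : Δ => (i : Λ)) (fun i : Δ => (i : Λ)) =
      (Matrix.diagonal (fun i : Δ => (V i : ℂ)) +
        (((Ht - z • (1 : Matrix Λ Λ ℂ))⁻¹).submatrix
          (fun i : Δ => (i : Λ)) (fun i : Δ => (i : Λ)))⁻¹)⁻¹ := by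
  have hV_herm : (diagonal fun x => (V x : ℂ)).IsHermitian :=
    isHermitian_diagonal_of_self_adjoint _ (funext fun x => Complex.conj_ofReal (V x))
  have hA := hHt.isUnit_sub_smul_one hz
  have hB := (hHt.add hV_herm).isUnit_sub_smul_one hz
  have hresolvent := inv_sub_inv (iff_of_true hA hB)
  rw [sub_sub_sub_cancel_right, add_sub_cancel_left] at hresolvent
  have he : Function.Injective ((↑) : Δ → Λ) := Subtype.val_injective
  have hV_range : ∀ x ∉ Set.range ((↑) : Δ → Λ), (V x : ℂ) = 0 := fun x hx => by
    simp [hV x fun h => hx ⟨⟨x, h⟩, rfl⟩]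
  have hgt := ((hHt.imPosDef_inv_sub_smul_one hz).submatrix he).isUnit
  exact ⟨hgt, eq_inv_add_inv_of_sub_eq_mul_mul hgt <|
    (congrArg (submatrix · _ _) hresolvent).trans (submatrix_mul_diagonal_mul _ _ _ he hV_range _ _)⟩
end

section
/- Positivity of imaginary parts: Let Λ be a finite index set, Δ ⊆ Λ nonempty, H a Hermitian matrix in Matrix Λ Λ ℂ, and z ∈ ℂ with Im z > 0. Let g_Δ(z) be the Δ×Δ submatrix of (H − z·1)⁻¹. Then (i) Im g_Δ(z) is positive definite, so in particular g_Δ(z) is invertible, and (ii) −Im( g_Δ(z)⁻¹ ) is positive definite. -/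
open Matrix
open scoped ComplexOrder

/-!
`Im (H - z) = -(Im z) • 1` is negative definite. For invertible `A` one has
`Im (A⁻¹) = -A⁻¹ (Im A) A⁻ᴴ`, so inversion turns a definite imaginary part into one of the
opposite sign, and a matrix with definite imaginary part is invertible since `Im ⟨v, A v⟩ ≠ 0`
for `v ≠ 0`. Hence `Im ((H - z)⁻¹)` is positive definite, so is its compression to `Δ`, and
inverting once more gives the second claim.
-/

/-- The "imaginary part" of a square complex matrix: `Im M = (M - Mᴴ)/(2i)`. -/
noncomputable def mIm {ι : Type*} (M : Matrix ι ι ℂ) : Matrix ι ι ℂ :=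
  (2 * Complex.I)⁻¹ • (M - Mᴴ)

section mIm

variable {n m : Type*}

lemma mIm_neg (A : Matrix n n ℂ) : mIm (-A) = -mIm A := by
  simp only [mIm, conjTranspose_neg, neg_sub_neg, ← smul_neg, neg_sub]

lemma mIm_sub (A B : Matrix n n ℂ) : mIm (A - B) = mIm A - mIm B := by
  simp only [mIm, conjTranspose_sub, ← smul_sub]
  congr 1
  abel

lemma Matrix.IsHermitian.mIm_eq_zero {A : Matrix n n ℂ} (hA : A.IsHermitian) : mIm A = 0 := by
  rw [mIm, hA.eq, sub_self, smul_zero]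

lemma mIm_smul_one [DecidableEq n] (z : ℂ) : mIm (z • (1 : Matrix n n ℂ)) = (z.im : ℂ) • 1 := by
  rw [mIm, conjTranspose_smul, conjTranspose_one, ← sub_smul, smul_smul, Complex.star_def,
    Complex.sub_conj]
  congr 1
  push_cast
  field_simp

lemma mIm_submatrix (A : Matrix n n ℂ) (e : m → n) :
    mIm (A.submatrix e e) = (mIm A).submatrix e e := by
  ext i j
  simp [mIm]

lemma posDef_neg_mIm_sub_smul_one [DecidableEq n] {H : Matrix n n ℂ} (hH : H.IsHermitian)
    {z : ℂ} (hz : 0 < z.im) : (-mIm (H - z • (1 : Matrix n n ℂ))).PosDef := by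
  rw [mIm_sub, hH.mIm_eq_zero, mIm_smul_one, zero_sub, neg_neg]
  exact PosDef.one.smul (by exact_mod_cast hz)

lemma dotProduct_mIm_mulVec [Fintype n] (A : Matrix n n ℂ) (v : n → ℂ) :
    star v ⬝ᵥ mIm A *ᵥ v = ((star v ⬝ᵥ A *ᵥ v).im : ℂ) := by
  have hstar : star v ⬝ᵥ Aᴴ *ᵥ v = star (star v ⬝ᵥ A *ᵥ v) := by
    rw [star_dotProduct, star_mulVec, conjTranspose_conjTranspose, ← dotProduct_mulVec]
  rw [mIm, smul_mulVec, dotProduct_smul, sub_mulVec, dotProduct_sub, hstar, Complex.star_def,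
    Complex.sub_conj, smul_eq_mul]
  push_cast
  field_simp

variable [Fintype n] [DecidableEq n]

lemma isUnit_of_posDef_mIm {A : Matrix n n ℂ} (h : (mIm A).PosDef) : IsUnit A := by
  by_contra hA
  obtain ⟨v, hv, hAv⟩ : ∃ v ≠ 0, A *ᵥ v = 0 := by
    rw [isUnit_iff_isUnit_det, isUnit_iff_ne_zero, not_not] at hA
    exact exists_mulVec_eq_zero_iff.2 hA
  simpa [dotProduct_mIm_mulVec, hAv] using h.dotProduct_mulVec_pos hv

lemma mIm_inv {A : Matrix n n ℂ} (hA : IsUnit A) : mIm A⁻¹ = -(A⁻¹ * mIm A * A⁻¹ᴴ) := by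
  have hAH : IsUnit Aᴴ.det := by rwa [det_conjTranspose, isUnit_star, ← isUnit_iff_isUnit_det]
  rw [mIm, mIm, conjTranspose_nonsing_inv, Matrix.mul_smul, Matrix.smul_mul, ← smul_neg,
    Matrix.mul_sub, Matrix.sub_mul, nonsing_inv_mul _ ((isUnit_iff_isUnit_det A).1 hA),
    Matrix.one_mul, Matrix.mul_assoc, mul_nonsing_inv _ hAH, Matrix.mul_one, neg_sub]

lemma posDef_neg_mIm_inv {A : Matrix n n ℂ} (h : (mIm A).PosDef) : (-mIm A⁻¹).PosDef := by
  have hA := isUnit_of_posDef_mIm h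
  rw [mIm_inv hA, neg_neg]
  exact h.mul_mul_conjTranspose_same
    (vecMul_injective_iff_isUnit.2 (isUnit_nonsing_inv_iff.2 hA))

lemma posDef_mIm_inv {A : Matrix n n ℂ} (h : (-mIm A).PosDef) : (mIm A⁻¹).PosDef := by
  have hA : IsUnit A := by simpa using isUnit_of_posDef_mIm (A := -A) (by rwa [mIm_neg])
  rw [mIm_inv hA, ← Matrix.neg_mul, ← Matrix.mul_neg]
  exact h.mul_mul_conjTranspose_same
    (vecMul_injective_iff_isUnit.2 (isUnit_nonsing_inv_iff.2 hA))

end mIm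

theorem im_resolvent_compression_posDef_general {Λ : Type*} [Fintype Λ] [DecidableEq Λ]
    (Δ : Finset Λ)
    (H : Matrix Λ Λ ℂ) (hH : H.IsHermitian) (z : ℂ) (hz : 0 < z.im) :
    (mIm (((H - z • (1 : Matrix Λ Λ ℂ))⁻¹).submatrix
        (fun i : Δ => (i : Λ)) (fun i : Δ => (i : Λ)))).PosDef ∧
    IsUnit (((H - z • (1 : Matrix Λ Λ ℂ))⁻¹).submatrix
        (fun i : Δ => (i : Λ)) (fun i : Δ => (i : Λ))) ∧
    (-(mIm ((((H - z • (1 : Matrix Λ Λ ℂ))⁻¹).submatrix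
        (fun i : Δ => (i : Λ)) (fun i : Δ => (i : Λ)))⁻¹))).PosDef := by
  have hg : (mIm (((H - z • (1 : Matrix Λ Λ ℂ))⁻¹).submatrix
      (fun i : Δ => (i : Λ)) (fun i : Δ => (i : Λ)))).PosDef := by
    rw [mIm_submatrix]
    exact (posDef_mIm_inv (posDef_neg_mIm_sub_smul_one hH hz)).submatrix Subtype.coe_injective
  exact ⟨hg, isUnit_of_posDef_mIm hg, posDef_neg_mIm_inv hg⟩

/-- Positivity of imaginary parts: for a Hermitian `H` and `Im z > 0`, the `Δ×Δ`
compression `g_Δ(z)` of the resolvent `(H − z)⁻¹` has positive definite imaginary part,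
is invertible, and `−Im(g_Δ(z)⁻¹)` is positive definite. -/
theorem im_resolvent_compression_posDef {Λ : Type*} [Fintype Λ] [DecidableEq Λ]
    (Δ : Finset Λ) (hΔ : Δ.Nonempty)
    (H : Matrix Λ Λ ℂ) (hH : H.IsHermitian) (z : ℂ) (hz : 0 < z.im) :
    (mIm (((H - z • (1 : Matrix Λ Λ ℂ))⁻¹).submatrix
        (fun i : Δ => (i : Λ)) (fun i : Δ => (i : Λ)))).PosDef ∧
    IsUnit (((H - z • (1 : Matrix Λ Λ ℂ))⁻¹).submatrix
        (fun i : Δ => (i : Λ)) (fun i : Δ => (i : Λ))) ∧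
    (-(mIm ((((H - z • (1 : Matrix Λ Λ ℂ))⁻¹).submatrix
        (fun i : Δ => (i : Λ)) (fun i : Δ => (i : Λ)))⁻¹))).PosDef :=
  im_resolvent_compression_posDef_general Δ H hH z hz
end

section
/- Deterministic eigenvalue-counting bound: Let Λ be a finite index set, H a Hermitian matrix in Matrix Λ Λ ℂ, let a < b be real numbers, J = [a, b], and set z = ((a + b) + i(b − a))/2. Let N be the number of eigenvalues of H in J counted with multiplicity. Then for every positive integer n, C(N, n) ≤ (b − a)ⁿ · Σ_{Δ ⊆ Λ, |Δ| = n} det( Im g_Δ(z) ), where g_Δ(z) is the Δ×Δ submatrix of (H − z·1)⁻¹, C(N, n) is the binomial coefficient, and each det(Im g_Δ(z)) is a nonnegative real number. -/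
open Matrix
open scoped BigOperators

/-!
Diagonalizing `H = U diag(λ) U*` gives `(H - z)⁻¹ = U diag((λ - z)⁻¹) U*`, so `Im (H - z)⁻¹` is
the functional calculus `μ(H)` with `μ x = Im (x - z)⁻¹ = Im z / |x - z|²`. The sum of the
principal `n × n` minors of a matrix is, up to sign, a coefficient of its characteristic
polynomial, so for `μ(H)` it is the elementary symmetric function `eₙ(μ(λ₁), …, μ(λ_N))`.
Every `μ(λᵢ)` is nonnegative, and `μ ≥ (b - a)⁻¹` on `[a, b]` (i.e. `χ_J ≤ |J| Im (x - z)⁻¹`),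
so the `C(N, n)` products over eigenvalues in `J` alone already give `C(N, n) (b - a)⁻ⁿ`.
-/

open Polynomial Finset

lemma mIm_submatrix_s17 {ι κ : Type*} (A : Matrix ι ι ℂ) (f : κ → ι) :
    mIm (A.submatrix f f) = (mIm A).submatrix f f := by
  ext i j
  simp [mIm]

lemma map_mIm {ι κ F : Type*} [FunLike F (Matrix ι ι ℂ) (Matrix κ κ ℂ)]
    [LinearMapClass F ℂ (Matrix ι ι ℂ) (Matrix κ κ ℂ)]
    [StarHomClass F (Matrix ι ι ℂ) (Matrix κ κ ℂ)] (φ : F) (M : Matrix ι ι ℂ) :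
    φ (mIm M) = mIm (φ M) := by
  simp only [mIm, map_smul, map_sub, ← star_eq_conjTranspose, map_star]

lemma mIm_diagonal {ι : Type*} [DecidableEq ι] (w : ι → ℂ) :
    mIm (diagonal w) = diagonal fun i => ((w i).im : ℂ) := by
  rw [mIm, diagonal_conjTranspose, diagonal_sub, ← diagonal_smul]
  congr 1
  funext i
  simp only [Pi.smul_apply, Pi.star_apply, Complex.star_def, Complex.sub_conj, smul_eq_mul]
  push_cast
  field_simp

lemma sum_minors_eq_sum_prod_of_charpoly_eq {R ι : Type*} [CommRing R] [Fintype ι]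
    [DecidableEq ι] (M : Matrix ι ι R) (d : ι → R) (hM : M.charpoly = ∏ i, (X - C (d i)))
    (n : ℕ) :
    ∑ s ∈ (univ : Finset ι).powersetCard n, (M.submatrix (Subtype.val : s → ι) Subtype.val).det =
      ∑ t ∈ univ.powersetCard n, ∏ i ∈ t, d i := by
  by_cases hn : n ≤ Fintype.card ι
  · have hcoeff := M.charpoly_coeff_eq_sum_minors n hn
    have hprod :
        ∏ i, (X - C (d i)) = (((univ : Finset ι).val.map d).map fun r => X - C r).prod := by
      rw [Multiset.map_map]; rfl
    rw [hM, hprod, Multiset.prod_X_sub_C_coeff _ (by simp)] at hcoeff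
    simp only [Multiset.card_map, card_val, card_univ, Nat.sub_sub_self hn, esymm_map_val] at hcoeff
    exact ((isUnit_neg_one.pow n).mul_left_cancel hcoeff).symm
  · have hempty : univ.powersetCard n = (∅ : Finset (Finset ι)) :=
      powersetCard_eq_empty.mpr (by simpa using hn)
    simp [hempty]

lemma choose_card_mul_pow_le_sum_prod {ι R : Type*} [Fintype ι] [CommSemiring R] [PartialOrder R]
    [IsOrderedRing R] (s : Finset ι) {μ : ι → R} {c : R} (hμ : ∀ i, 0 ≤ μ i)
    (hc : ∀ i ∈ s, c ≤ μ i) (hc0 : 0 ≤ c) (n : ℕ) :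
    (#s).choose n * c ^ n ≤ ∑ t ∈ univ.powersetCard n, ∏ i ∈ t, μ i := by
  calc ((#s).choose n : R) * c ^ n = ∑ t ∈ s.powersetCard n, ∏ _i ∈ t, c := by
        rw [← card_powersetCard, ← nsmul_eq_mul, ← sum_const]
        exact sum_congr rfl fun t ht => by rw [prod_const, (mem_powersetCard.mp ht).2]
    _ ≤ ∑ t ∈ s.powersetCard n, ∏ i ∈ t, μ i :=
        sum_le_sum fun t ht => prod_le_prod (fun _ _ => hc0)
          fun i hi => hc i ((mem_powersetCard.mp ht).1 hi)
    _ ≤ ∑ t ∈ univ.powersetCard n, ∏ i ∈ t, μ i :=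
        sum_le_sum_of_subset_of_nonneg (powersetCard_mono (subset_univ s))
          fun t _ _ => prod_nonneg fun i _ => hμ i

namespace Matrix.IsHermitian

variable {ι 𝕜 : Type*} [Fintype ι] [DecidableEq ι] [RCLike 𝕜] {A : Matrix ι ι 𝕜}

lemma inv_sub_smul_one (hA : A.IsHermitian) {z : 𝕜} (hz : ∀ i, (hA.eigenvalues i : 𝕜) ≠ z) :
    (A - z • 1)⁻¹ = Unitary.conjStarAlgAut 𝕜 _ hA.eigenvectorUnitary
      (diagonal fun i => ((hA.eigenvalues i : 𝕜) - z)⁻¹) := by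
  set φ := Unitary.conjStarAlgAut 𝕜 _ hA.eigenvectorUnitary
  have hsub : A - z • 1 = φ (diagonal fun i => (hA.eigenvalues i : 𝕜) - z) := by
    conv_lhs => rw [hA.spectral_theorem]
    rw [← diagonal_sub, ← smul_one_eq_diagonal, map_sub, map_smul, map_one]
    rfl
  refine inv_eq_left_inv ?_
  rw [hsub, ← map_mul, diagonal_mul_diagonal, ← map_one φ, ← diagonal_one]
  exact congrArg _ (congrArg _ (funext fun i => inv_mul_cancel₀ (sub_ne_zero.mpr (hz i))))

lemma mIm_inv_sub_smul_one {A : Matrix ι ι ℂ} (hA : A.IsHermitian) {z : ℂ}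
    (hz : ∀ i, (hA.eigenvalues i : ℂ) ≠ z) :
    mIm (A - z • 1)⁻¹ = cfc (fun x : ℝ => ((x - z)⁻¹).im) A := by
  rw [hA.inv_sub_smul_one hz, ← map_mIm, mIm_diagonal, hA.cfc_eq, IsHermitian.cfc]
  rfl

lemma sum_minors_cfc (hA : A.IsHermitian) (f : ℝ → ℝ) (n : ℕ) :
    ∑ s ∈ (univ : Finset ι).powersetCard n,
        ((cfc f A).submatrix (Subtype.val : s → ι) Subtype.val).det =
      ((∑ t ∈ (univ : Finset ι).powersetCard n, ∏ i ∈ t, f (hA.eigenvalues i) : ℝ) : 𝕜) := by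
  rw [sum_minors_eq_sum_prod_of_charpoly_eq _ _ (hA.charpoly_cfc_eq f)]
  push_cast
  rfl

end Matrix.IsHermitian

lemma im_inv_ofReal_sub_nonneg (x : ℝ) {z : ℂ} (hz : 0 ≤ z.im) : 0 ≤ (((x : ℂ) - z)⁻¹).im := by
  rw [Complex.inv_im, Complex.sub_im, Complex.ofReal_im, zero_sub, neg_neg]
  exact div_nonneg hz (Complex.normSq_nonneg _)

lemma inv_sub_le_im_inv_ofReal_sub {a b x : ℝ} (hab : a < b) (hx : x ∈ Set.Icc a b) :
    (b - a)⁻¹ ≤ (((x : ℂ) - ((a + b : ℂ) + Complex.I * ((b : ℂ) - a)) / 2)⁻¹).im := by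
  obtain ⟨hax, hxb⟩ := hx
  rw [Complex.inv_im, Complex.normSq_apply]
  simp only [Complex.sub_im, Complex.ofReal_im, Complex.div_ofNat_im, Complex.add_im, add_zero,
    Complex.mul_im, Complex.I_re, sub_self, mul_zero, Complex.I_im, Complex.sub_re,
    Complex.ofReal_re, one_mul, zero_add, zero_sub, neg_neg, Complex.div_ofNat_re, Complex.add_re,
    Complex.mul_re, zero_mul, mul_neg, neg_mul]
  rw [inv_eq_one_div,
    div_le_div_iff₀ (by linarith) (by nlinarith [mul_self_nonneg (x - (a + b) / 2)])]
  nlinarith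

theorem choose_count_le_sum_det_im_general {Λ : Type*} [Fintype Λ] [DecidableEq Λ]
    (H : Matrix Λ Λ ℂ) (hH : H.IsHermitian) (a b : ℝ) (hab : a < b) (n : ℕ) :
    ((((Finset.univ.filter fun i => hH.eigenvalues i ∈ Set.Icc a b).card).choose n : ℝ)) ≤
      (b - a) ^ n *
        ∑ Δ ∈ ((Finset.univ : Finset Λ).powersetCard n),
          ((mIm (((H - (((a + b : ℂ) + Complex.I * ((b : ℂ) - a)) / 2) •
              (1 : Matrix Λ Λ ℂ))⁻¹).submatrix
              (fun i : Δ => (i : Λ)) (fun i : Δ => (i : Λ)))).det).re := by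
  set z : ℂ := ((a + b : ℂ) + Complex.I * ((b : ℂ) - a)) / 2
  have hz_im : z.im = (b - a) / 2 := by simp [z]
  have hz : ∀ i, (hH.eigenvalues i : ℂ) ≠ z := fun i h => by
    have := congrArg Complex.im h
    simp only [Complex.ofReal_im, hz_im] at this
    linarith
  set T := Finset.univ.filter fun i => hH.eigenvalues i ∈ Set.Icc a b
  calc ((#T).choose n : ℝ) = (b - a) ^ n * ((#T).choose n * ((b - a)⁻¹) ^ n) := by
        rw [mul_left_comm, ← mul_pow, mul_inv_cancel₀ (sub_pos.mpr hab).ne', one_pow, mul_one]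
    _ ≤ (b - a) ^ n * ∑ t ∈ univ.powersetCard n, ∏ i ∈ t, (((hH.eigenvalues i : ℂ) - z)⁻¹).im := by
        gcongr
        exact choose_card_mul_pow_le_sum_prod _
          (fun i => im_inv_ofReal_sub_nonneg _ (by rw [hz_im]; linarith))
          (fun i hi => inv_sub_le_im_inv_ofReal_sub hab (mem_filter.mp hi).2)
          (inv_nonneg.mpr (sub_pos.mpr hab).le) n
    _ = _ := by
        simp_rw [mIm_submatrix_s17, hH.mIm_inv_sub_smul_one hz]
        rw [← Complex.re_sum, hH.sum_minors_cfc]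
        rfl

/-- Deterministic eigenvalue-counting bound: if `N` is the number of eigenvalues of the
Hermitian matrix `H` in `J = [a,b]` (with multiplicity) and
`z = ((a+b) + i(b−a))/2`, then `C(N, n) ≤ |J|ⁿ Σ_{|Δ| = n} det Im g_Δ(z)`. -/
theorem choose_count_le_sum_det_im {Λ : Type*} [Fintype Λ] [DecidableEq Λ]
    (H : Matrix Λ Λ ℂ) (hH : H.IsHermitian) (a b : ℝ) (hab : a < b) (n : ℕ) (hn : 0 < n) :
    ((((Finset.univ.filter fun i => hH.eigenvalues i ∈ Set.Icc a b).card).choose n : ℝ)) ≤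
      (b - a) ^ n *
        ∑ Δ ∈ ((Finset.univ : Finset Λ).powersetCard n),
          ((mIm (((H - (((a + b : ℂ) + Complex.I * ((b : ℂ) - a)) / 2) •
              (1 : Matrix Λ Λ ℂ))⁻¹).submatrix
              (fun i : Δ => (i : Λ)) (fun i : Δ => (i : Λ)))).det).re :=
  choose_count_le_sum_det_im_general H hH a b hab n
end
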